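/- arXiv:1505.04304 — 2 statements merged into one kernel-verified Lean document; each statement's English description precedes it below -/
import Mathlib

section
/- Let N be a subalgebra of the pseudo MV-algebra M = Γ(G,u) such that both N and M are strongly projectable. Then for every polar ideal I of N there is a unique Boolean element b ∈ N such that I = ↓_N b and (I^{⊥_N})^{⊥_M} = ↓_M b. -/
variable {G : Type*} [Lattice G] [AddGroup G]
  [CovariantClass G G (· + ·) (· ≤ ·)]
  [CovariantClass G G (Function.swap (· + ·)) (· ≤ ·)]

/-- `u` is a strong unit of the lattice-ordered group `G`. -/
def IsStrongUnit (u : G) : Prop := 0 ≤ u ∧ ∀ x : G, ∃ n : ℕ, x ≤ n • u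

/-- The operation `x ⊕ y := (x + y) ⊓ u` of the pseudo MV-algebra `Γ(G,u)`. -/
def oplus (u x y : G) : G := (x + y) ⊓ u

/-- The operation `x ⊙ y := (x - u + y) ⊔ 0` of the pseudo MV-algebra `Γ(G,u)`. -/
def odot (u x y : G) : G := (x - u + y) ⊔ 0

/-- `n.x := x ⊕ ⋯ ⊕ x` (`n` summands), with `0.x = 0`. -/
def nOplus (u : G) : ℕ → G → G
  | 0, _ => 0
  | n + 1, x => oplus u (nOplus u n x) x

/-- `I` is an ideal of the pseudo MV-algebra with carrier `C ⊆ Γ(G,u)`: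
a nonempty subset of `C`, downward closed within `C`, and closed under `⊕`. -/
def IsIdealIn (u : G) (C I : Set G) : Prop :=
  I ⊆ C ∧ I.Nonempty ∧ (∀ x ∈ I, ∀ y ∈ C, y ≤ x → y ∈ I) ∧
    ∀ x ∈ I, ∀ y ∈ I, oplus u x y ∈ I

/-- `I` is a normal ideal: `x ⊕ I = I ⊕ x` for all `x ∈ C`. -/
def IsNormalIdealIn (u : G) (C I : Set G) : Prop :=
  IsIdealIn u C I ∧ ∀ x ∈ C, (fun i => oplus u x i) '' I = (fun i => oplus u i x) '' I

/-- `⟨X⟩_n`, the smallest normal ideal (of the carrier `C`) containing `X`. -/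
def normalGenIn (u : G) (C X : Set G) : Set G :=
  ⋂₀ {I | IsNormalIdealIn u C I ∧ X ⊆ I}

/-- The polar `X^⊥ = {y ∈ C : y ∧ x = 0 for all x ∈ X}` computed in carrier `C`. -/
def polarIn (C X : Set G) : Set G := {y ∈ C | ∀ x ∈ X, y ⊓ x = 0}

/-- `A ⊕ B := {a ⊕ b : a ∈ A, b ∈ B}`. -/
def setOplus (u : G) (A B : Set G) : Set G := Set.image2 (oplus u) A B

/-- `↓a` computed within the carrier `C`. -/
def dsetIn (C : Set G) (a : G) : Set G := {x ∈ C | x ≤ a}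

/-- `I` is a summand-ideal of the carrier `C`: a normal ideal such that for
some normal ideal `J`, `I ∩ J = {0}` and `⟨I ∪ J⟩_n = C`. -/
def IsSummandIdealIn (u : G) (C I : Set G) : Prop :=
  IsNormalIdealIn u C I ∧ ∃ J, IsNormalIdealIn u C J ∧ I ∩ J = {0} ∧
    normalGenIn u C (I ∪ J) = C

/-- `I` is a polar ideal of the carrier `C`: `I = I^⊥⊥`. -/
def IsPolarIdealIn (C I : Set G) : Prop := polarIn C (polarIn C I) = I

/-- `a` is a Boolean element of the carrier `C`: `a ∈ C` and `a ⊕ a = a`. -/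
def IsBooleanIn (u : G) (C : Set G) (a : G) : Prop := a ∈ C ∧ oplus u a a = a

/-- The carrier `C` is strongly projectable: every polar ideal is a summand-ideal. -/
def IsStronglyProjectableIn (u : G) (C : Set G) : Prop :=
  ∀ I : Set G, IsPolarIdealIn C I → IsSummandIdealIn u C I

/-- `N` is a subalgebra of `Γ(G,u)`: contains `0` and `u`, closed under `⊕`,
`x⁻ = u - x` and `x∼ = -x + u`. -/
def IsSubalg (u : G) (N : Set G) : Prop :=
  N ⊆ Set.Icc 0 u ∧ 0 ∈ N ∧ u ∈ N ∧
    (∀ x ∈ N, ∀ y ∈ N, oplus u x y ∈ N) ∧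
    (∀ x ∈ N, u - x ∈ N) ∧ (∀ x ∈ N, -x + u ∈ N)

/-- `N` is a large subalgebra of `Γ(G,u)`: for every nonzero `y ∈ Γ(G,u)` there
are `n ∈ ℕ` and a nonzero `x ∈ N` with `x ≤ n.y`. -/
def IsLargeSubalg (u : G) (N : Set G) : Prop :=
  IsSubalg u N ∧ ∀ y ∈ Set.Icc (0 : G) u, y ≠ 0 →
    ∃ n : ℕ, ∃ x ∈ N, x ≠ 0 ∧ x ≤ nOplus u n y

/-!
Strong projectability of `N` makes the polar ideal `I` a summand-ideal: there is a normal ideal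
`J` with `I ∩ J = {0}` whose join with `I` is all of `N`. That join consists of the elements of
`N` lying below some `a ⊕ b` with `a ∈ I`, `b ∈ J`, so `u ≤ a + b` for such `a` and `b`. Since
`a ⊓ b = 0`, every `y ∈ [0,u]` disjoint from `b` satisfies `y = y ⊓ (a + b) ≤ y ⊓ a + y ⊓ b ≤ a`.
As `b ∈ I^⊥` and `a ∈ I`, this identifies both `I = I^⊥⊥` (polars in `N`) and the polar of `I^⊥`
in `M` with `↓a`; finally `a ⊕ a ∈ I = ↓a` makes `a` Boolean.
-/

section LatticeOrderedGroup

variable {α : Type*} [Lattice α]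

theorem eq_of_dsetIn_eq {C : Set α} {a b : α} (ha : a ∈ C) (hb : b ∈ C)
    (h : dsetIn C a = dsetIn C b) : a = b := by
  have ha' : a ∈ dsetIn C b := h ▸ ⟨ha, le_rfl⟩
  have hb' : b ∈ dsetIn C a := h ▸ ⟨hb, le_rfl⟩
  exact le_antisymm ha'.2 hb'.2

variable [AddGroup α] {u : α}

theorem oplus_zero {x : α} (hx : x ≤ u) : oplus u x 0 = x := by
  rw [oplus, add_zero, inf_eq_left.mpr hx]

theorem zero_oplus {x : α} (hx : x ≤ u) : oplus u 0 x = x := by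
  rw [oplus, zero_add, inf_eq_left.mpr hx]

theorem oplus_sub_cancel {x y : α} (hy : y ≤ u) : oplus u (y - x) x = y := by
  rw [oplus, sub_add_cancel, inf_eq_left.mpr hy]

theorem oplus_neg_add_cancel {x y : α} (hy : y ≤ u) : oplus u x (-x + y) = y := by
  rw [oplus, add_neg_cancel_left, inf_eq_left.mpr hy]

theorem le_oplus_left [AddLeftMono α] {x y : α} (hy : 0 ≤ y) (hx : x ≤ u) : x ≤ oplus u x y :=
  le_inf (le_add_of_nonneg_right hy) hx

theorem le_oplus_right [AddRightMono α] {x y : α} (hx : 0 ≤ x) (hy : y ≤ u) :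
    y ≤ oplus u x y :=
  le_inf (le_add_of_nonneg_left hx) hy

theorem sub_le_of_le_oplus [AddRightMono α] {x y c : α} (h : y ≤ oplus u c x) : y - x ≤ c :=
  sub_le_iff_le_add.mpr (h.trans inf_le_left)

theorem neg_add_le_of_le_oplus [AddLeftMono α] {x y c : α} (h : y ≤ oplus u x c) : -x + y ≤ c :=
  neg_add_le_iff_le_add.mpr (h.trans inf_le_left)

namespace IsSubalg

variable {N : Set α} {x y : α}

theorem nonneg (hN : IsSubalg u N) (hx : x ∈ N) : 0 ≤ x := (hN.1 hx).1

theorem le_unit (hN : IsSubalg u N) (hx : x ∈ N) : x ≤ u := (hN.1 hx).2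

theorem unit_mem (hN : IsSubalg u N) : u ∈ N := hN.2.2.1

theorem oplus_mem (hN : IsSubalg u N) (hx : x ∈ N) (hy : y ∈ N) : oplus u x y ∈ N :=
  hN.2.2.2.1 x hx y hy

theorem sub_mem [AddRightMono α] (hN : IsSubalg u N) (hx : x ∈ N) (hy : y ∈ N) (hxy : x ≤ y) :
    y - x ∈ N := by
  have h : y - x = u - oplus u x (-y + u) := by
    rw [oplus, inf_eq_left.mpr (by simpa using add_le_add_left hxy (-y + u))]
    simp [sub_eq_add_neg, add_assoc]
  exact h ▸ hN.2.2.2.2.1 _ (hN.oplus_mem hx (hN.2.2.2.2.2 y hy))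

theorem neg_add_mem [AddLeftMono α] (hN : IsSubalg u N) (hx : x ∈ N) (hy : y ∈ N)
    (hxy : x ≤ y) : -x + y ∈ N := by
  have h : -x + y = -oplus u (u - y) x + u := by
    rw [oplus, inf_eq_left.mpr (by simpa using add_le_add_right hxy (u - y))]
    simp [sub_eq_add_neg, add_assoc]
  exact h ▸ hN.2.2.2.2.2 _ (hN.oplus_mem (hN.2.2.2.2.1 y hy) hx)

theorem inf_mem [AddLeftMono α] (hN : IsSubalg u N) (hx : x ∈ N) (hy : y ∈ N) : x ⊓ y ∈ N := by
  have hux : u - x ∈ N := hN.2.2.2.2.1 x hx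
  have h : x ⊓ y = -(u - x) + oplus u (u - x) y := by
    rw [oplus, add_inf, inf_comm]
    simp [sub_eq_add_neg, add_assoc]
  exact h ▸ hN.neg_add_mem hux (hN.oplus_mem hux hy)
    (le_oplus_left (hN.nonneg hy) (hN.le_unit hux))

end IsSubalg

variable [AddLeftMono α] [AddRightMono α]

theorem inf_add_le_inf_add_inf {x y z : α} (hx : 0 ≤ x) (hy : 0 ≤ y) (hz : 0 ≤ z) :
    x ⊓ (y + z) ≤ x ⊓ y + x ⊓ z := by
  rw [inf_add, add_inf, add_inf]
  refine le_inf (le_inf ?_ ?_) (le_inf ?_ inf_le_right)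
  · exact inf_le_left.trans (le_add_of_nonneg_right hx)
  · exact inf_le_left.trans (le_add_of_nonneg_right hz)
  · exact inf_le_left.trans (le_add_of_nonneg_left hy)

theorem le_of_le_add_of_inf_eq_zero {y a b : α} (hy : 0 ≤ y) (ha : 0 ≤ a) (hb : 0 ≤ b)
    (hle : y ≤ a + b) (hyb : y ⊓ b = 0) : y ≤ a :=
  calc y = y ⊓ (a + b) := (inf_eq_left.mpr hle).symm
    _ ≤ y ⊓ a + y ⊓ b := inf_add_le_inf_add_inf hy ha hb
    _ = y ⊓ a := by rw [hyb, add_zero]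
    _ ≤ a := inf_le_right

theorem oplus_le_oplus {x x' y y' : α} (hx : x ≤ x') (hy : y ≤ y') :
    oplus u x y ≤ oplus u x' y' :=
  inf_le_inf_right u (add_le_add hx hy)

theorem oplus_assoc {x y z : α} (hx : 0 ≤ x) (hz : 0 ≤ z) :
    oplus u (oplus u x y) z = oplus u x (oplus u y z) := by
  unfold oplus
  rw [inf_add, add_inf, inf_assoc, inf_assoc, inf_eq_right.mpr (le_add_of_nonneg_right hz),
    inf_eq_right.mpr (le_add_of_nonneg_left hx), add_assoc]

end LatticeOrderedGroup

section Ideals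

variable {α : Type*} [Lattice α] [AddGroup α] {u : α} {N I J : Set α}

theorem IsIdealIn.zero_mem (hN : IsSubalg u N) (hI : IsIdealIn u N I) : 0 ∈ I := by
  obtain ⟨x, hx⟩ := hI.2.1
  exact hI.2.2.1 x hx 0 hN.2.1 (hN.nonneg (hI.1 hx))

theorem IsIdealIn.inf_eq_zero [AddLeftMono α] (hN : IsSubalg u N) (hI : IsIdealIn u N I)
    (hJ : IsIdealIn u N J) (hIJ : I ∩ J = {0}) {a b : α} (ha : a ∈ I) (hb : b ∈ J) :
    a ⊓ b = 0 := by
  have hab : a ⊓ b ∈ N := hN.inf_mem (hI.1 ha) (hJ.1 hb)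
  have h : a ⊓ b ∈ I ∩ J := ⟨hI.2.2.1 a ha _ hab inf_le_left, hJ.2.2.1 b hb _ hab inf_le_right⟩
  rwa [hIJ] at h

theorem IsIdealIn.isBooleanIn_of_eq_dsetIn [AddLeftMono α] (hN : IsSubalg u N)
    (hI : IsIdealIn u N I) {a : α} (ha : a ∈ I) (hIa : I = dsetIn N a) : IsBooleanIn u N a := by
  have haa : oplus u a a ∈ dsetIn N a := hIa ▸ hI.2.2.2 a ha a ha
  exact ⟨hI.1 ha, le_antisymm haa.2 (le_oplus_left (hN.nonneg (hI.1 ha)) (hN.le_unit (hI.1 ha)))⟩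

theorem IsNormalIdealIn.exists_oplus_eq_oplus_left {C : Set α} (hI : IsNormalIdealIn u C I)
    {x a : α} (hx : x ∈ C) (ha : a ∈ I) : ∃ a' ∈ I, oplus u x a = oplus u a' x := by
  obtain ⟨a', ha', h⟩ : oplus u x a ∈ (fun i => oplus u i x) '' I :=
    hI.2 x hx ▸ ⟨a, ha, rfl⟩
  exact ⟨a', ha', h.symm⟩

theorem IsNormalIdealIn.exists_oplus_eq_oplus_right {C : Set α} (hI : IsNormalIdealIn u C I)
    {x a : α} (hx : x ∈ C) (ha : a ∈ I) : ∃ a' ∈ I, oplus u a x = oplus u x a' := by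
  obtain ⟨a', ha', h⟩ : oplus u a x ∈ (fun i => oplus u x i) '' I :=
    (hI.2 x hx).symm ▸ ⟨a, ha, rfl⟩
  exact ⟨a', ha', h.symm⟩

/-- Since `x ⊕ k = ((x ⊕ k) - x) ⊕ x` with `(x ⊕ k) - x ∈ N`, bounding `x ⊕ k` by some `k' ⊕ x`
suffices (and symmetrically). -/
theorem isNormalIdealIn_of_exists_le [AddLeftMono α] [AddRightMono α] {K : Set α}
    (hN : IsSubalg u N) (hK : IsIdealIn u N K)
    (hleft : ∀ x ∈ N, ∀ k ∈ K, ∃ k' ∈ K, oplus u x k ≤ oplus u k' x)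
    (hright : ∀ x ∈ N, ∀ k ∈ K, ∃ k' ∈ K, oplus u k x ≤ oplus u x k') :
    IsNormalIdealIn u N K := by
  refine ⟨hK, fun x hx => Set.Subset.antisymm ?_ ?_⟩
  · rintro _ ⟨k, hk, rfl⟩
    obtain ⟨k', hk', hle⟩ := hleft x hx k hk
    have hxk : oplus u x k ∈ N := hN.oplus_mem hx (hK.1 hk)
    have hm : oplus u x k - x ∈ N :=
      hN.sub_mem hx hxk (le_oplus_left (hN.nonneg (hK.1 hk)) (hN.le_unit hx))
    exact ⟨_, hK.2.2.1 k' hk' _ hm (sub_le_of_le_oplus hle), oplus_sub_cancel (hN.le_unit hxk)⟩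
  · rintro _ ⟨k, hk, rfl⟩
    obtain ⟨k', hk', hle⟩ := hright x hx k hk
    have hkx : oplus u k x ∈ N := hN.oplus_mem (hK.1 hk) hx
    have hm : -x + oplus u k x ∈ N :=
      hN.neg_add_mem hx hkx (le_oplus_right (hN.nonneg (hK.1 hk)) (hN.le_unit hx))
    exact ⟨_, hK.2.2.1 k' hk' _ hm (neg_add_le_of_le_oplus hle),
      oplus_neg_add_cancel (hN.le_unit hkx)⟩

end Ideals

def idealJoin {α : Type*} [Lattice α] [AddGroup α] (u : α) (N I J : Set α) : Set α :=
  {x ∈ N | ∃ a ∈ I, ∃ b ∈ J, x ≤ oplus u a b}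

section IdealJoin

variable {α : Type*} [Lattice α] [AddGroup α] {u : α} {N I J : Set α}

theorem left_subset_idealJoin (hN : IsSubalg u N) (hI : IsIdealIn u N I)
    (hJ : IsIdealIn u N J) : I ⊆ idealJoin u N I J :=
  fun a ha => ⟨hI.1 ha, a, ha, 0, hJ.zero_mem hN, (oplus_zero (hN.le_unit (hI.1 ha))).ge⟩

theorem right_subset_idealJoin (hN : IsSubalg u N) (hI : IsIdealIn u N I)
    (hJ : IsIdealIn u N J) : J ⊆ idealJoin u N I J :=
  fun b hb => ⟨hJ.1 hb, 0, hI.zero_mem hN, b, hb, (zero_oplus (hN.le_unit (hJ.1 hb))).ge⟩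

variable [AddLeftMono α] [AddRightMono α]

theorem isIdealIn_idealJoin (hN : IsSubalg u N) (hI : IsNormalIdealIn u N I)
    (hJ : IsIdealIn u N J) : IsIdealIn u N (idealJoin u N I J) := by
  refine ⟨fun x hx => hx.1, ⟨0, left_subset_idealJoin hN hI.1 hJ (hI.1.zero_mem hN)⟩, ?_, ?_⟩
  · rintro x ⟨-, a, ha, b, hb, hx⟩ y hy hyx
    exact ⟨hy, a, ha, b, hb, hyx.trans hx⟩
  · rintro x ⟨hx, a₁, ha₁, b₁, hb₁, hx₁⟩ y ⟨hy, a₂, ha₂, b₂, hb₂, hy₂⟩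
    obtain ⟨a₂', ha₂', hswap⟩ := hI.exists_oplus_eq_oplus_left (hJ.1 hb₁) ha₂
    have h₁ : 0 ≤ a₁ := hN.nonneg (hI.1.1 ha₁)
    have h₂ : 0 ≤ a₂' := hN.nonneg (hI.1.1 ha₂')
    have h₃ : 0 ≤ b₁ := hN.nonneg (hJ.1 hb₁)
    have h₄ : 0 ≤ b₂ := hN.nonneg (hJ.1 hb₂)
    refine ⟨hN.oplus_mem hx hy, oplus u a₁ a₂', hI.1.2.2.2 _ ha₁ _ ha₂',
      oplus u b₁ b₂, hJ.2.2.2 _ hb₁ _ hb₂, ?_⟩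
    calc oplus u x y ≤ oplus u (oplus u a₁ b₁) (oplus u a₂ b₂) := oplus_le_oplus hx₁ hy₂
      _ = oplus u a₁ (oplus u (oplus u b₁ a₂) b₂) := by
        rw [oplus_assoc h₁ (hN.nonneg (hN.oplus_mem (hI.1.1 ha₂) (hJ.1 hb₂))),
          oplus_assoc h₃ h₄]
      _ = oplus u (oplus u a₁ a₂') (oplus u b₁ b₂) := by
        rw [hswap, oplus_assoc h₂ h₄,
          oplus_assoc h₁ (hN.nonneg (hN.oplus_mem (hJ.1 hb₁) (hJ.1 hb₂)))]

theorem isNormalIdealIn_idealJoin (hN : IsSubalg u N) (hI : IsNormalIdealIn u N I)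
    (hJ : IsNormalIdealIn u N J) : IsNormalIdealIn u N (idealJoin u N I J) := by
  refine isNormalIdealIn_of_exists_le hN (isIdealIn_idealJoin hN hI hJ.1) ?_ ?_
  · rintro x hx k ⟨-, a, ha, b, hb, hk⟩
    obtain ⟨a', ha', hxa⟩ := hI.exists_oplus_eq_oplus_left hx ha
    obtain ⟨b', hb', hxb⟩ := hJ.exists_oplus_eq_oplus_left hx hb
    have hab' : oplus u a' b' ∈ N := hN.oplus_mem (hI.1.1 ha') (hJ.1.1 hb')
    have h₁ : 0 ≤ a' := hN.nonneg (hI.1.1 ha')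
    have h₂ : 0 ≤ b := hN.nonneg (hJ.1.1 hb)
    refine ⟨oplus u a' b', ⟨hab', a', ha', b', hb', le_rfl⟩, ?_⟩
    calc oplus u x k ≤ oplus u x (oplus u a b) := oplus_le_oplus le_rfl hk
      _ = oplus u a' (oplus u x b) := by
        rw [← oplus_assoc (hN.nonneg hx) h₂, hxa, oplus_assoc h₁ h₂]
      _ = oplus u (oplus u a' b') x := by
        rw [hxb, ← oplus_assoc h₁ (hN.nonneg hx)]
  · rintro x hx k ⟨-, a, ha, b, hb, hk⟩
    obtain ⟨a', ha', hax⟩ := hI.exists_oplus_eq_oplus_right hx ha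
    obtain ⟨b', hb', hbx⟩ := hJ.exists_oplus_eq_oplus_right hx hb
    have hab' : oplus u a' b' ∈ N := hN.oplus_mem (hI.1.1 ha') (hJ.1.1 hb')
    have h₁ : 0 ≤ a := hN.nonneg (hI.1.1 ha)
    have h₂ : 0 ≤ b' := hN.nonneg (hJ.1.1 hb')
    refine ⟨oplus u a' b', ⟨hab', a', ha', b', hb', le_rfl⟩, ?_⟩
    calc oplus u k x ≤ oplus u (oplus u a b) x := oplus_le_oplus hk le_rfl
      _ = oplus u (oplus u a x) b' := by
        rw [oplus_assoc h₁ (hN.nonneg hx), hbx, ← oplus_assoc h₁ h₂]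
      _ = oplus u x (oplus u a' b') := by
        rw [hax, oplus_assoc (hN.nonneg hx) h₂]

theorem unit_mem_idealJoin (hN : IsSubalg u N) (hI : IsNormalIdealIn u N I)
    (hJ : IsNormalIdealIn u N J) (hgen : normalGenIn u N (I ∪ J) = N) :
    u ∈ idealJoin u N I J := by
  have hu : u ∈ normalGenIn u N (I ∪ J) := by rw [hgen]; exact hN.unit_mem
  exact Set.mem_sInter.mp hu _ ⟨isNormalIdealIn_idealJoin hN hI hJ,
    Set.union_subset (left_subset_idealJoin hN hI.1 hJ.1) (right_subset_idealJoin hN hI.1 hJ.1)⟩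

end IdealJoin

theorem polarIn_eq_dsetIn {α : Type*} [Lattice α] [AddGroup α] [AddLeftMono α]
    [AddRightMono α] {u a b : α} {C P : Set α} (hC : C ⊆ Set.Icc 0 u) (hP : ∀ z ∈ P, 0 ≤ z)
    (ha : 0 ≤ a) (hab : u ≤ a + b) (hbP : b ∈ P) (haP : ∀ z ∈ P, z ⊓ a = 0) :
    polarIn C P = dsetIn C a := by
  ext y
  constructor
  · rintro ⟨hy, hyP⟩
    exact ⟨hy, le_of_le_add_of_inf_eq_zero (hC hy).1 ha (hP b hbP) ((hC hy).2.trans hab)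
      (hyP b hbP)⟩
  · rintro ⟨hy, hya⟩
    refine ⟨hy, fun z hz => le_antisymm ?_ (le_inf (hC hy).1 (hP z hz))⟩
    calc y ⊓ z ≤ a ⊓ z := inf_le_inf_right z hya
      _ = 0 := by rw [inf_comm, haP z hz]

theorem stmt14_general (u : G) (N : Set G) (hN : IsSubalg u N)
    (hNsp : IsStronglyProjectableIn u N)
    (I : Set G) (hI : IsPolarIdealIn N I) :
    ∃! b : G, IsBooleanIn u N b ∧ I = dsetIn N b ∧
      polarIn (Set.Icc (0 : G) u) (polarIn N I) = dsetIn (Set.Icc (0 : G) u) b := by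
  obtain ⟨hInormal, J, hJnormal, hIJ, hgen⟩ := hNsp I hI
  obtain ⟨-, a, ha, b, hb, hu⟩ := unit_mem_idealJoin hN hInormal hJnormal hgen
  have haN : a ∈ N := hInormal.1.1 ha
  have hbP : b ∈ polarIn N I := ⟨hJnormal.1.1 hb, fun x hx => by
    rw [inf_comm]; exact hInormal.1.inf_eq_zero hN hJnormal.1 hIJ hx hb⟩
  have hPolar : ∀ {C}, C ⊆ Set.Icc 0 u → polarIn C (polarIn N I) = dsetIn C a := fun hC =>
    polarIn_eq_dsetIn hC (fun z hz => hN.nonneg hz.1) (hN.nonneg haN) (hu.trans inf_le_left)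
      hbP (fun z hz => hz.2 a ha)
  have hIa : I = dsetIn N a := hI.symm.trans (hPolar hN.1)
  refine ⟨a, ⟨hInormal.1.isBooleanIn_of_eq_dsetIn hN ha hIa, hIa, hPolar subset_rfl⟩, ?_⟩
  rintro c ⟨hc, hIc, -⟩
  exact eq_of_dsetIn_eq hc.1 haN (hIc.symm.trans hIa)

theorem stmt14 (u : G) (hu : IsStrongUnit u) (N : Set G) (hN : IsSubalg u N)
    (hNsp : IsStronglyProjectableIn u N)
    (hMsp : IsStronglyProjectableIn u (Set.Icc (0 : G) u))
    (I : Set G) (hI : IsPolarIdealIn N I) :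
    ∃! b : G, IsBooleanIn u N b ∧ I = dsetIn N b ∧
      polarIn (Set.Icc (0 : G) u) (polarIn N I) = dsetIn (Set.Icc (0 : G) u) b :=
  stmt14_general u N hN hNsp I hI
end

section
/- Let N be a large subalgebra of the pseudo MV-algebra M = Γ(G,u) (so M is an essential extension of N). Then the maps Φ : ρ(M) → ρ(N) defined by Φ(I) = I ∩ N, and Ψ : ρ(N) → ρ(M) defined by Ψ(J) = (J^{⊥_N})^{⊥_M}, are mutually inverse, inclusion-preserving bijections between the set ρ(M) of polar ideals of M and the set ρ(N) of polar ideals of N. -/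
variable {G : Type*} [Lattice G] [AddGroup G]
  [CovariantClass G G (· + ·) (· ≤ ·)]
  [CovariantClass G G (Function.swap (· + ·)) (· ≤ ·)]

/-! For a polar `P` of `M = Γ(G,u)` one has `(P ∩ N)^⊥ = P^⊥` in `M`. Indeed, if `z ⊥ P ∩ N` but
`z ⊓ a ≠ 0` for some `a ∈ P`, largeness gives a nonzero `x ∈ N` below a multiple of `z ⊓ a`. Being
below a multiple of `a`, `x` lies in `P = P^⊥⊥`, so `x ⊥ z`; being below a multiple of `z`, it must
then vanish. Given this, `Ψ ∘ Φ` and `Φ ∘ Ψ` are identities by the calculus of polars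
(`X^⊥_N = X^⊥_M ∩ N`, `X^⊥⊥⊥ = X^⊥`), and both maps are monotone. -/

section Polar

variable {α : Type*} [Lattice α] [AddGroup α] {C N X Y : Set α}

lemma polarIn_subset (C X : Set α) : polarIn C X ⊆ C := fun _ h => h.1

lemma polarIn_anti (C : Set α) (h : X ⊆ Y) : polarIn C Y ⊆ polarIn C X :=
  fun _ hz => ⟨hz.1, fun x hx => hz.2 x (h hx)⟩

lemma subset_polarIn_polarIn (h : X ⊆ C) : X ⊆ polarIn C (polarIn C X) :=
  fun x hx => ⟨h hx, fun y hy => by rw [inf_comm]; exact hy.2 x hx⟩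

lemma IsPolarIdealIn.subset (h : IsPolarIdealIn C X) : X ⊆ C :=
  h ▸ polarIn_subset C _

lemma isPolarIdealIn_polarIn (h : X ⊆ C) : IsPolarIdealIn C (polarIn C X) :=
  (polarIn_anti C (subset_polarIn_polarIn h)).antisymm
    (subset_polarIn_polarIn (polarIn_subset C X))

lemma polarIn_eq_polarIn_inter (h : N ⊆ C) (X : Set α) :
    polarIn N X = polarIn C X ∩ N := by
  ext y
  exact ⟨fun hy => ⟨⟨h hy.1, hy.2⟩, hy.1⟩, fun hy => ⟨hy.2, hy.1.2⟩⟩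

lemma IsPolarIdealIn.polarIn_polarIn_inter (hNC : N ⊆ C) (hX : IsPolarIdealIn N X) :
    polarIn C (polarIn N X) ∩ N = X := by
  rw [← polarIn_eq_polarIn_inter hNC, hX]

end Polar

lemma inf_nsmul_eq_zero {a b : G} (ha : 0 ≤ a) (hb : 0 ≤ b) (h : a ⊓ b = 0) :
    ∀ n : ℕ, a ⊓ n • b = 0
  | 0 => by rw [zero_nsmul, inf_eq_right.mpr ha]
  | n + 1 => by
    have hle_b : a ⊓ (n + 1) • b ≤ b :=
      calc a ⊓ (n + 1) • b ≤ (a + b) ⊓ (n • b + b) := by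
            rw [succ_nsmul]
            exact inf_le_inf_right _ (le_add_of_nonneg_right hb)
        _ = a ⊓ n • b + b := (inf_add a (n • b) b).symm
        _ = b := by rw [inf_nsmul_eq_zero ha hb h n, zero_add]
    exact le_antisymm (h ▸ le_inf inf_le_left hle_b) (le_inf ha (nsmul_nonneg hb _))

lemma eq_zero_of_le_nsmul_of_inf_eq_zero {x z : G} {n : ℕ} (hx : 0 ≤ x) (hz : 0 ≤ z)
    (hxz : x ≤ n • z) (h : x ⊓ z = 0) : x = 0 := by
  rw [← inf_eq_left.mpr hxz, inf_nsmul_eq_zero hx hz h]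

lemma nOplus_le_nsmul (u y : G) : ∀ n : ℕ, nOplus u n y ≤ n • y
  | 0 => by rw [nOplus, zero_nsmul]
  | n + 1 => by
    rw [nOplus, oplus, succ_nsmul]
    exact inf_le_left.trans (add_le_add (nOplus_le_nsmul u y n) le_rfl)

lemma nsmul_mem_polarIn {C B : Set G} (hB : ∀ b ∈ B, 0 ≤ b) {a x : G} {n : ℕ}
    (ha : a ∈ polarIn C B) (ha0 : 0 ≤ a) (hx : x ∈ C) (hx0 : 0 ≤ x) (hxa : x ≤ n • a) :
    x ∈ polarIn C B := by
  refine ⟨hx, fun b hb => le_antisymm ?_ (le_inf hx0 (hB b hb))⟩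
  calc x ⊓ b ≤ b ⊓ n • a := inf_comm x b ▸ inf_le_inf_left b hxa
    _ = 0 := inf_nsmul_eq_zero (hB b hb) ha0 (by rw [inf_comm]; exact ha.2 b hb) n

namespace IsLargeSubalg

variable {u : G} {N I : Set G}

lemma polarIn_inter_eq (hN : IsLargeSubalg u N) {P : Set G}
    (hP : IsPolarIdealIn (Set.Icc 0 u) P) :
    polarIn (Set.Icc 0 u) (P ∩ N) = polarIn (Set.Icc 0 u) P := by
  refine Set.Subset.antisymm ?_ (polarIn_anti _ Set.inter_subset_left)
  rintro z ⟨hzM, hz⟩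
  refine ⟨hzM, fun a ha => ?_⟩
  have haM := hP.subset ha
  by_contra hza
  obtain ⟨n, x, hxN, hx0, hxle⟩ :=
    hN.2 (z ⊓ a) ⟨le_inf hzM.1 haM.1, inf_le_left.trans hzM.2⟩ hza
  have hxM := hN.1.1 hxN
  have hx_nsmul : x ≤ n • (z ⊓ a) := hxle.trans (nOplus_le_nsmul u _ n)
  have hxP : x ∈ P := by
    rw [← hP] at ha ⊢
    exact nsmul_mem_polarIn (fun b hb => (polarIn_subset _ _ hb).1) ha haM.1 hxM hxM.1
      (hx_nsmul.trans (nsmul_le_nsmul_right inf_le_right n))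
  exact hx0 (eq_zero_of_le_nsmul_of_inf_eq_zero hxM.1 hzM.1
    (hx_nsmul.trans (nsmul_le_nsmul_right inf_le_left n)) (inf_comm z x ▸ hz x ⟨hxP, hxN⟩))

lemma polarIn_polarIn_inter (hN : IsLargeSubalg u N) (hI : IsPolarIdealIn (Set.Icc 0 u) I) :
    polarIn (Set.Icc 0 u) (polarIn N (I ∩ N)) = I := by
  rw [polarIn_eq_polarIn_inter hN.1.1, hN.polarIn_inter_eq hI,
    hN.polarIn_inter_eq (isPolarIdealIn_polarIn hI.subset), hI]

lemma isPolarIdealIn_inter (hN : IsLargeSubalg u N) (hI : IsPolarIdealIn (Set.Icc 0 u) I) :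
    IsPolarIdealIn N (I ∩ N) := by
  rw [IsPolarIdealIn, polarIn_eq_polarIn_inter hN.1.1 (polarIn N _), hN.polarIn_polarIn_inter hI]

end IsLargeSubalg

theorem stmt15_general (u : G) (N : Set G)
    (hN : IsLargeSubalg u N) :
    (∀ I : Set G, IsPolarIdealIn (Set.Icc (0 : G) u) I → IsPolarIdealIn N (I ∩ N)) ∧
      (∀ J : Set G, IsPolarIdealIn N J →
        IsPolarIdealIn (Set.Icc (0 : G) u) (polarIn (Set.Icc (0 : G) u) (polarIn N J))) ∧
      (∀ I : Set G, IsPolarIdealIn (Set.Icc (0 : G) u) I →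
        polarIn (Set.Icc (0 : G) u) (polarIn N (I ∩ N)) = I) ∧
      (∀ J : Set G, IsPolarIdealIn N J →
        polarIn (Set.Icc (0 : G) u) (polarIn N J) ∩ N = J) ∧
      (∀ I I' : Set G, IsPolarIdealIn (Set.Icc (0 : G) u) I → IsPolarIdealIn (Set.Icc (0 : G) u) I' →
        (I ⊆ I' ↔ I ∩ N ⊆ I' ∩ N)) ∧
      (∀ J J' : Set G, IsPolarIdealIn N J → IsPolarIdealIn N J' →
        (J ⊆ J' ↔ polarIn (Set.Icc (0 : G) u) (polarIn N J) ⊆ polarIn (Set.Icc (0 : G) u) (polarIn N J'))) := by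
  have hNM : N ⊆ Set.Icc 0 u := hN.1.1
  refine ⟨fun I hI => hN.isPolarIdealIn_inter hI,
    fun J _ => isPolarIdealIn_polarIn ((polarIn_subset N J).trans hNM),
    fun I hI => hN.polarIn_polarIn_inter hI,
    fun J hJ => hJ.polarIn_polarIn_inter hNM, ?_, ?_⟩
  · intro I I' hI hI'
    refine ⟨Set.inter_subset_inter_left N, fun h => ?_⟩
    rw [← hN.polarIn_polarIn_inter hI, ← hN.polarIn_polarIn_inter hI']
    exact polarIn_anti _ (polarIn_anti _ h)
  · intro J J' hJ hJ'
    refine ⟨fun h => polarIn_anti _ (polarIn_anti _ h), fun h => ?_⟩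
    rw [← hJ.polarIn_polarIn_inter hNM, ← hJ'.polarIn_polarIn_inter hNM]
    exact Set.inter_subset_inter_left N h

theorem stmt15 (u : G) (hu : IsStrongUnit u) (N : Set G)
    (hN : IsLargeSubalg u N) :
    (∀ I : Set G, IsPolarIdealIn (Set.Icc (0 : G) u) I → IsPolarIdealIn N (I ∩ N)) ∧
      (∀ J : Set G, IsPolarIdealIn N J →
        IsPolarIdealIn (Set.Icc (0 : G) u) (polarIn (Set.Icc (0 : G) u) (polarIn N J))) ∧
      (∀ I : Set G, IsPolarIdealIn (Set.Icc (0 : G) u) I →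
        polarIn (Set.Icc (0 : G) u) (polarIn N (I ∩ N)) = I) ∧
      (∀ J : Set G, IsPolarIdealIn N J →
        polarIn (Set.Icc (0 : G) u) (polarIn N J) ∩ N = J) ∧
      (∀ I I' : Set G, IsPolarIdealIn (Set.Icc (0 : G) u) I → IsPolarIdealIn (Set.Icc (0 : G) u) I' →
        (I ⊆ I' ↔ I ∩ N ⊆ I' ∩ N)) ∧
      (∀ J J' : Set G, IsPolarIdealIn N J → IsPolarIdealIn N J' →
        (J ⊆ J' ↔ polarIn (Set.Icc (0 : G) u) (polarIn N J) ⊆ polarIn (Set.Icc (0 : G) u) (polarIn N J'))) :=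
  stmt15_general u N hN
end
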